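/- arXiv:1301.2603 — 4 statements merged into one kernel-verified Lean document; each statement's English description precedes it below -/
import Mathlib

section
/- Let A ∈ ℝ^{d×N}, y ∈ ℝ^d, λ > 0, and T ⊆ {1,…,N}. Suppose x* is a solution of min_x (1/2)‖y − A x‖₂² + λ‖x‖₁ subject to x_{T^c} = 0, and that ‖A_{T^c}^T (y − A x*)‖_∞ < λ. Then every optimal solution x̂ of the unconstrained problem min_x (1/2)‖y − A x‖₂² + λ‖x‖₁ satisfies x̂_{T^c} = 0. -/
/-!
Write `x̂ - x* = u + v` with `u` supported on `T` and `v` off `T`, and let `F` be the lasso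
objective. For `0 < t < 1`, convexity of `F` and global optimality of `x̂` give
`F (x* + t (x̂ - x*)) ≤ F x*`, while optimality of `x*` among `T`-supported vectors gives
`F x* ≤ F (x* + t u)`. As `x* + t u` and `t v` have disjoint supports, the difference of the outer
terms is `t (λ ‖v‖₁ - ⟪v, Aᵀ (y - A x*)⟫) + O(t²)`, so `λ ‖v‖₁ ≤ ⟪v, Aᵀ (y - A x*)⟫`. The strict
dual bound `|(Aᵀ (y - A x*))ᵢ| < λ` off `T` then forces `v = 0`.
-/

open Finset Matrix Filter Topology

section

variable {m n : Type*} [Fintype m] [Fintype n]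

noncomputable def lassoObjective (A : Matrix m n ℝ) (y : m → ℝ) (lam : ℝ) (x : n → ℝ) : ℝ :=
  (1/2) * ∑ j, (y j - A.mulVec x j) ^ 2 + lam * ∑ i, |x i|

lemma convexOn_lassoObjective (A : Matrix m n ℝ) (y : m → ℝ) {lam : ℝ} (hlam : 0 ≤ lam) :
    ConvexOn ℝ Set.univ (lassoObjective A y lam) := by
  refine ⟨convex_univ, fun x _ x' _ a b ha hb hab => ?_⟩
  have hsq : ∀ j, (y j - (A *ᵥ (a • x + b • x')) j) ^ 2 ≤
      a * (y j - (A *ᵥ x) j) ^ 2 + b * (y j - (A *ᵥ x') j) ^ 2 := by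
    intro j
    have hres : y j - (A *ᵥ (a • x + b • x')) j
        = a * (y j - (A *ᵥ x) j) + b * (y j - (A *ᵥ x') j) := by
      simp only [mulVec_add, mulVec_smul, Pi.add_apply, Pi.smul_apply, smul_eq_mul]
      linear_combination (-y j) * hab
    rw [hres]
    nlinarith [mul_nonneg (mul_nonneg ha hb) (sq_nonneg ((A *ᵥ x) j - (A *ᵥ x') j))]
  have habs : ∀ i, |(a • x + b • x') i| ≤ a * |x i| + b * |x' i| := by
    intro i
    simpa [Real.norm_eq_abs] using (convexOn_norm (E := ℝ) convex_univ).2 trivial trivial ha hb hab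
      (x := x i) (y := x' i)
  simp only [lassoObjective, smul_eq_mul]
  calc (1/2) * ∑ j, (y j - (A *ᵥ (a • x + b • x')) j) ^ 2 + lam * ∑ i, |(a • x + b • x') i|
      ≤ (1/2) * ∑ j, (a * (y j - (A *ᵥ x) j) ^ 2 + b * (y j - (A *ᵥ x') j) ^ 2)
        + lam * ∑ i, (a * |x i| + b * |x' i|) := by
          gcongr with j _ i _
          exacts [hsq j, habs i]
    _ = _ := by simp only [sum_add_distrib, ← mul_sum]; ring

lemma sum_abs_add_of_disjoint {p v : n → ℝ} (hpv : ∀ i, p i = 0 ∨ v i = 0) :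
    ∑ i, |(p + v) i| = ∑ i, |p i| + ∑ i, |v i| := by
  rw [← sum_add_distrib]
  refine sum_congr rfl fun i _ => ?_
  rcases hpv i with h | h <;> simp [h]

lemma lassoObjective_add_of_disjoint (A : Matrix m n ℝ) (y : m → ℝ) (lam : ℝ) {p v : n → ℝ}
    (hpv : ∀ i, p i = 0 ∨ v i = 0) :
    lassoObjective A y lam (p + v) = lassoObjective A y lam p - v ⬝ᵥ (Aᵀ *ᵥ (y - A *ᵥ p))
      + (A *ᵥ v) ⬝ᵥ (A *ᵥ v) / 2 + lam * ∑ i, |v i| := by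
  have hquad : ∑ j, (y j - (A *ᵥ (p + v)) j) ^ 2 = ∑ j, (y j - (A *ᵥ p) j) ^ 2
      - 2 * (v ⬝ᵥ (Aᵀ *ᵥ (y - A *ᵥ p))) + (A *ᵥ v) ⬝ᵥ (A *ᵥ v) := by
    rw [mulVec_transpose, dotProduct_comm, ← dotProduct_mulVec]
    simp only [dotProduct, mulVec_add, Pi.add_apply, Pi.sub_apply, mul_sum, ← sum_sub_distrib,
      ← sum_add_distrib]
    exact sum_congr rfl fun j _ => by ring
  unfold lassoObjective
  rw [hquad, sum_abs_add_of_disjoint hpv]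
  ring

lemma nonpos_of_forall_add_mul_nonpos {L Q : ℝ} (h : ∀ t : ℝ, 0 < t → t < 1 → L + t * Q ≤ 0) :
    L ≤ 0 := by
  have hlim : Tendsto (fun t => L + t * Q) (𝓝[>] 0) (𝓝 L) :=
    ((by fun_prop : Continuous fun t : ℝ => L + t * Q).tendsto' 0 L (by simp)).mono_left
      nhdsWithin_le_nhds
  refine le_of_tendsto hlim ?_
  filter_upwards [Ioo_mem_nhdsGT one_pos] with t ht using h t ht.1 ht.2

lemma eq_zero_of_mul_sum_abs_le_dotProduct {v c : n → ℝ} {lam : ℝ}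
    (hc : ∀ i, v i ≠ 0 → |c i| < lam) (h : lam * ∑ i, |v i| ≤ v ⬝ᵥ c) : v = 0 := by
  have hterm : ∀ i, v i ≠ 0 → 0 < lam * |v i| - v i * c i := fun i hi => by
    have := calc v i * c i ≤ |v i * c i| := le_abs_self _
      _ = |v i| * |c i| := abs_mul _ _
      _ < |v i| * lam := mul_lt_mul_of_pos_left (hc i hi) (abs_pos.mpr hi)
    linarith
  by_contra hv
  obtain ⟨i, hi⟩ := Function.ne_iff.mp hv
  have hpos : 0 < ∑ i, (lam * |v i| - v i * c i) := by
    refine sum_pos' (fun j _ => ?_) ⟨i, mem_univ i, hterm i hi⟩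
    by_cases hj : v j = 0
    · simp [hj]
    · exact (hterm j hj).le
  rw [sum_sub_distrib, ← mul_sum] at hpos
  exact hpos.not_ge (sub_nonpos.mpr h)

lemma mul_sum_abs_le_dotProduct_of_forall_lassoObjective_le {A : Matrix m n ℝ} {y : m → ℝ}
    {lam : ℝ} {T : Finset n} {x₀ u v : n → ℝ} (hx₀ : ∀ i ∉ T, x₀ i = 0) (hu : ∀ i ∉ T, u i = 0)
    (hv : ∀ i ∈ T, v i = 0)
    (hle : ∀ t : ℝ, 0 < t → t < 1 →
      lassoObjective A y lam (x₀ + t • u + t • v) ≤ lassoObjective A y lam (x₀ + t • u)) :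
    lam * ∑ i, |v i| ≤ v ⬝ᵥ (Aᵀ *ᵥ (y - A *ᵥ x₀)) := by
  set c := Aᵀ *ᵥ (y - A *ᵥ x₀)
  suffices h : ∀ t : ℝ, 0 < t → t < 1 →
      lam * ∑ i, |v i| - v ⬝ᵥ c + t * (v ⬝ᵥ (Aᵀ *ᵥ (A *ᵥ u)) + (A *ᵥ v) ⬝ᵥ (A *ᵥ v) / 2) ≤ 0 by
    linarith [nonpos_of_forall_add_mul_nonpos h]
  intro t ht0 ht1
  have hdisj : ∀ i, (x₀ + t • u) i = 0 ∨ (t • v) i = 0 := fun i => by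
    by_cases hi : i ∈ T
    · simp [hv i hi]
    · simp [hx₀ i hi, hu i hi]
  have hgrad : Aᵀ *ᵥ (y - A *ᵥ (x₀ + t • u)) = c - t • (Aᵀ *ᵥ (A *ᵥ u)) := by
    rw [mulVec_add, mulVec_smul, sub_add_eq_sub_sub, mulVec_sub, mulVec_smul]
  have h := hle t ht0 ht1
  rw [lassoObjective_add_of_disjoint A y lam hdisj, hgrad] at h
  simp only [mulVec_smul, dotProduct_sub, dotProduct_smul, smul_dotProduct, smul_eq_mul,
    Pi.smul_apply, abs_mul, abs_of_pos ht0, ← mul_sum] at h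
  refine nonpos_of_mul_nonpos_right ?_ ht0
  linarith

end

theorem stmt0_general {d N : ℕ} (A : Matrix (Fin d) (Fin N) ℝ) (y : Fin d → ℝ)
    (lam : ℝ) (T : Finset (Fin N)) (xstar : Fin N → ℝ)
    (hsupp : ∀ i ∉ T, xstar i = 0)
    (hopt : ∀ x : Fin N → ℝ, (∀ i ∉ T, x i = 0) →
      (1/2) * ∑ j, (y j - A.mulVec xstar j)^2 + lam * ∑ i, |xstar i| ≤
      (1/2) * ∑ j, (y j - A.mulVec x j)^2 + lam * ∑ i, |x i|)
    (hdual : ∀ i ∉ T, |∑ j, A j i * (y j - A.mulVec xstar j)| < lam)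
    (xhat : Fin N → ℝ)
    (hxhat : ∀ x : Fin N → ℝ,
      (1/2) * ∑ j, (y j - A.mulVec xhat j)^2 + lam * ∑ i, |xhat i| ≤
      (1/2) * ∑ j, (y j - A.mulVec x j)^2 + lam * ∑ i, |x i|) :
    ∀ i ∉ T, xhat i = 0 := by
  intro i₀ hi₀
  have hlam : 0 ≤ lam := (abs_nonneg _).trans (hdual i₀ hi₀).le
  set u : Fin N → ℝ := fun i => if i ∈ T then xhat i - xstar i else 0
  set v : Fin N → ℝ := fun i => if i ∈ T then 0 else xhat i
  have hsplit : ∀ t : ℝ, xstar + t • u + t • v = (1 - t) • xstar + t • xhat := fun t => by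
    funext i
    by_cases hi : i ∈ T
    · simp only [Pi.add_apply, Pi.smul_apply, smul_eq_mul, u, v, hi, if_true]; ring
    · simp [u, v, hi, hsupp i hi]
  have hfirst : lam * ∑ i, |v i| ≤ v ⬝ᵥ (Aᵀ *ᵥ (y - A *ᵥ xstar)) := by
    refine mul_sum_abs_le_dotProduct_of_forall_lassoObjective_le hsupp (u := u)
      (fun i hi => by simp [u, hi]) (fun i hi => by simp [v, hi]) fun t ht0 ht1 => ?_
    have hconv := (convexOn_lassoObjective A y hlam).2 trivial trivial (sub_nonneg.mpr ht1.le)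
      ht0.le (sub_add_cancel 1 t) (x := xstar) (y := xhat)
    have hmin : lassoObjective A y lam xhat ≤ lassoObjective A y lam xstar := hxhat xstar
    have hrestricted : lassoObjective A y lam xstar ≤ lassoObjective A y lam (xstar + t • u) :=
      hopt _ fun i hi => by simp [u, hi, hsupp i hi]
    rw [hsplit]
    simp only [smul_eq_mul] at hconv
    linarith [mul_le_mul_of_nonneg_left hmin ht0.le]
  have hv : v = 0 := eq_zero_of_mul_sum_abs_le_dotProduct
    (fun i hvi => hdual i fun hi => hvi (by simp [v, hi])) hfirst
  simpa [v, hi₀] using congrFun hv i₀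

theorem stmt0 {d N : ℕ} (A : Matrix (Fin d) (Fin N) ℝ) (y : Fin d → ℝ)
    (lam : ℝ) (hlam : 0 < lam) (T : Finset (Fin N)) (xstar : Fin N → ℝ)
    (hsupp : ∀ i ∉ T, xstar i = 0)
    (hopt : ∀ x : Fin N → ℝ, (∀ i ∉ T, x i = 0) →
      (1/2) * ∑ j, (y j - A.mulVec xstar j)^2 + lam * ∑ i, |xstar i| ≤
      (1/2) * ∑ j, (y j - A.mulVec x j)^2 + lam * ∑ i, |x i|)
    (hdual : ∀ i ∉ T, |∑ j, A j i * (y j - A.mulVec xstar j)| < lam)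
    (xhat : Fin N → ℝ)
    (hxhat : ∀ x : Fin N → ℝ,
      (1/2) * ∑ j, (y j - A.mulVec xhat j)^2 + lam * ∑ i, |xhat i| ≤
      (1/2) * ∑ j, (y j - A.mulVec x j)^2 + lam * ∑ i, |x i|) :
    ∀ i ∉ T, xhat i = 0 :=
  stmt0_general A y lam T xstar hsupp hopt hdual xhat hxhat
end

section
/- Let A ∈ ℝ^{d×N}, y ∈ ℝ^d, and suppose x* is any optimal solution of min_x ‖x‖₁ subject to y = A x, where the feasible set is nonempty. If r(P(A)) > 0 is the inradius of the symmetrized convex hull of the columns of A, then ‖x*‖₁ ≤ ‖y‖₂ / r(P(A)). -/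
/-!
The inradius condition says that `A` maps the `ℓ₁` unit ball onto a set containing the Euclidean
ball of radius `r`. Rescaling `y` into that ball and scaling the preimage back yields a feasible
point of `ℓ₁` norm at most `‖y‖₂ / r`, which bounds the optimum.
-/

open Metric

theorem LinearMap.exists_apply_eq_norm_le_div_of_closedBall_subset {E F : Type*}
    [SeminormedAddCommGroup E] [NormedSpace ℝ E] [NormedAddCommGroup F] [NormedSpace ℝ F]
    (f : E →ₗ[ℝ] F) {r : ℝ} (hr : 0 < r) (hball : closedBall 0 r ⊆ f '' closedBall 0 1) (y : F) :
    ∃ x, f x = y ∧ ‖x‖ ≤ ‖y‖ / r := by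
  rcases eq_or_ne y 0 with rfl | hy
  · exact ⟨0, map_zero f, by simp⟩
  have hy' : 0 < ‖y‖ := norm_pos_iff.mpr hy
  have hv : (r / ‖y‖) • y ∈ closedBall 0 r := by
    rw [mem_closedBall_zero_iff, norm_smul, Real.norm_of_nonneg (by positivity),
      div_mul_cancel₀ _ hy'.ne']
  obtain ⟨x, hx, hfx⟩ := hball hv
  refine ⟨(‖y‖ / r) • x, ?_, ?_⟩
  · rw [map_smul, hfx, smul_smul, div_mul_div_cancel₀ hr.ne', div_self hy'.ne', one_smul]
  · rw [norm_smul, Real.norm_of_nonneg (by positivity)]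
    exact mul_le_of_le_one_right (by positivity) (mem_closedBall_zero_iff.mp hx)

lemma PiLp.norm_toLp_one_eq_sum_abs {n : Type*} [Fintype n] (x : n → ℝ) :
    ‖WithLp.toLp 1 x‖ = ∑ i, |x i| := by
  simp [PiLp.norm_eq_of_L1]

lemma EuclideanSpace.norm_toLp_eq_sqrt_sum_sq {n : Type*} [Fintype n] (x : n → ℝ) :
    ‖WithLp.toLp 2 x‖ = Real.sqrt (∑ i, x i ^ 2) := by
  simp [EuclideanSpace.norm_eq]

theorem stmt2_general {d N : ℕ} (A : Matrix (Fin d) (Fin N) ℝ) (y : Fin d → ℝ)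
    (r : ℝ) (hr : 0 < r)
    (hball : ∀ v : Fin d → ℝ, Real.sqrt (∑ i, (v i)^2) ≤ r →
      ∃ x : Fin N → ℝ, (∑ i, |x i|) ≤ 1 ∧ A.mulVec x = v)
    (xstar : Fin N → ℝ)
    (hopt : ∀ x : Fin N → ℝ, A.mulVec x = y → ∑ i, |xstar i| ≤ ∑ i, |x i|) :
    ∑ i, |xstar i| ≤ Real.sqrt (∑ i, (y i)^2) / r := by
  let f : WithLp 1 (Fin N → ℝ) →ₗ[ℝ] EuclideanSpace ℝ (Fin d) :=
    (WithLp.linearEquiv 2 ℝ _).symm.toLinearMap ∘ₗ A.mulVecLin ∘ₗ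
      (WithLp.linearEquiv 1 ℝ _).toLinearMap
  have hsub : closedBall 0 r ⊆ f '' closedBall 0 1 := by
    intro v hv
    rw [mem_closedBall_zero_iff, ← WithLp.toLp_ofLp (p := 2) v,
      EuclideanSpace.norm_toLp_eq_sqrt_sum_sq] at hv
    obtain ⟨x, hx, hAx⟩ := hball v.ofLp hv
    refine ⟨WithLp.toLp 1 x, ?_, ?_⟩
    · rwa [mem_closedBall_zero_iff, PiLp.norm_toLp_one_eq_sum_abs]
    · simp [f, hAx]
  obtain ⟨x, hfx, hx⟩ :=
    f.exists_apply_eq_norm_le_div_of_closedBall_subset hr hsub (WithLp.toLp 2 y)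
  rw [EuclideanSpace.norm_toLp_eq_sqrt_sum_sq] at hx
  calc ∑ i, |xstar i| ≤ ∑ i, |x.ofLp i| := hopt x.ofLp (by simpa [f] using hfx)
    _ = ‖x‖ := (PiLp.norm_toLp_one_eq_sum_abs x.ofLp).symm
    _ ≤ _ := hx

theorem stmt2 {d N : ℕ} (A : Matrix (Fin d) (Fin N) ℝ) (y : Fin d → ℝ)
    (r : ℝ) (hr : 0 < r)
    (hball : ∀ v : Fin d → ℝ, Real.sqrt (∑ i, (v i)^2) ≤ r →
      ∃ x : Fin N → ℝ, (∑ i, |x i|) ≤ 1 ∧ A.mulVec x = v)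
    (xstar : Fin N → ℝ) (hfeas : A.mulVec xstar = y)
    (hopt : ∀ x : Fin N → ℝ, A.mulVec x = y → ∑ i, |xstar i| ≤ ∑ i, |x i|) :
    ∑ i, |xstar i| ≤ Real.sqrt (∑ i, (y i)^2) / r :=
  stmt2_general A y r hr hball xstar hopt
end

section
/- Let A ∈ ℝ^{d×N}, λ > 0, let y = y∥ + y⊥ with y∥ in the column span of A, let β̂ minimize (1/2)‖y − A β‖₂² + λ‖β‖₁, and let β̄ satisfy A β̄ = y∥. Let h = β̂ − β̄, let S be the support of β̄, and suppose there exists ν ∈ ℝ^d with v = A^T ν satisfying v_S = sgn(β̄_S) and ‖v_{S^c}‖_∞ ≤ 1. Then (1/4)‖A h‖₂² ≤ (1/2)‖y − A β̄‖₂² + λ² ‖ν‖₂². -/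
theorem stmt14 {d N : ℕ} (A : Matrix (Fin d) (Fin N) ℝ) (y : Fin d → ℝ)
    (lam : ℝ) (hlam : 0 < lam)
    (βhat βbar : Fin N → ℝ)
    (hopt : ∀ β : Fin N → ℝ,
      (1/2) * ∑ i, (y i - A.mulVec βhat i)^2 + lam * ∑ j, |βhat j| ≤
      (1/2) * ∑ i, (y i - A.mulVec β i)^2 + lam * ∑ j, |β j|)
    (hproj : ∀ j, ∑ i, (y i - A.mulVec βbar i) * A i j = 0)
    (ν : Fin d → ℝ)
    (hcertS : ∀ j, βbar j ≠ 0 → ∑ i, A i j * ν i = Real.sign (βbar j))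
    (hcertSc : ∀ j, βbar j = 0 → |∑ i, A i j * ν i| ≤ 1) :
    (1/4) * ∑ i, (A.mulVec (βhat - βbar) i)^2 ≤
      (1/2) * ∑ i, (y i - A.mulVec βbar i)^2 + lam^2 * ∑ i, (ν i)^2 := by
  classical
  have hwdef : ∀ i, A.mulVec (βhat - βbar) i = A.mulVec βhat i - A.mulVec βbar i := by
    intro i
    simp [Matrix.mulVec_sub]
  have hwsum : ∀ i, A.mulVec (βhat - βbar) i = ∑ j, A i j * (βhat j - βbar j) := by
    intro i
    simp [Matrix.mulVec, dotProduct]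
  -- orthogonality of residual
  have h1 : ∑ i, (y i - A.mulVec βbar i) * A.mulVec (βhat - βbar) i = 0 := by
    calc ∑ i, (y i - A.mulVec βbar i) * A.mulVec (βhat - βbar) i
        = ∑ i, ∑ j, ((y i - A.mulVec βbar i) * A i j) * (βhat j - βbar j) := by
          apply Finset.sum_congr rfl; intro i _
          rw [hwsum i, Finset.mul_sum]
          apply Finset.sum_congr rfl; intro j _; ring
      _ = ∑ j, (∑ i, (y i - A.mulVec βbar i) * A i j) * (βhat j - βbar j) := by
          rw [Finset.sum_comm]
          apply Finset.sum_congr rfl; intro j _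
          rw [Finset.sum_mul]
      _ = 0 := by
          apply Finset.sum_eq_zero; intro j _; rw [hproj j, zero_mul]
  -- expand the residual at βhat
  have expand : ∑ i, (y i - A.mulVec βhat i)^2
      = ∑ i, (y i - A.mulVec βbar i)^2
        - 2 * ∑ i, (y i - A.mulVec βbar i) * A.mulVec (βhat - βbar) i
        + ∑ i, (A.mulVec (βhat - βbar) i)^2 := by
    rw [Finset.mul_sum, ← Finset.sum_sub_distrib, ← Finset.sum_add_distrib]
    apply Finset.sum_congr rfl; intro i _
    rw [hwdef i]; ring
  have hoptb := hopt βbar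
  have key : (1/2) * ∑ i, (A.mulVec (βhat - βbar) i)^2
      ≤ lam * (∑ j, |βbar j| - ∑ j, |βhat j|) := by
    rw [expand, h1] at hoptb
    rw [mul_sub]
    linarith
  -- ℓ1 lower bound via dual certificate
  have l1 : ∑ j, |βbar j| + ∑ j, (∑ i, A i j * ν i) * (βhat j - βbar j) ≤ ∑ j, |βhat j| := by
    rw [← Finset.sum_add_distrib]
    apply Finset.sum_le_sum
    intro j _
    by_cases hj : βbar j = 0
    · rw [hj]
      have hb := hcertSc j hj
      have h2 : (∑ i, A i j * ν i) * (βhat j - 0) ≤ |βhat j| := by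
        calc (∑ i, A i j * ν i) * (βhat j - 0)
            ≤ |(∑ i, A i j * ν i) * (βhat j - 0)| := le_abs_self _
          _ = |∑ i, A i j * ν i| * |βhat j| := by rw [abs_mul, sub_zero]
          _ ≤ 1 * |βhat j| := mul_le_mul_of_nonneg_right hb (abs_nonneg _)
          _ = |βhat j| := one_mul _
      simpa using h2
    · rw [hcertS j hj]
      rcases lt_or_gt_of_ne hj with hneg | hpos
      · rw [Real.sign_of_neg hneg, abs_of_neg hneg]
        have := neg_abs_le (βhat j)
        linarith
      · rw [Real.sign_of_pos hpos, abs_of_pos hpos]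
        have := le_abs_self (βhat j)
        linarith
  -- swap sums
  have swap : ∑ j, (∑ i, A i j * ν i) * (βhat j - βbar j)
      = ∑ i, ν i * A.mulVec (βhat - βbar) i := by
    calc ∑ j, (∑ i, A i j * ν i) * (βhat j - βbar j)
        = ∑ j, ∑ i, ν i * (A i j * (βhat j - βbar j)) := by
          apply Finset.sum_congr rfl; intro j _
          rw [Finset.sum_mul]
          apply Finset.sum_congr rfl; intro i _; ring
      _ = ∑ i, ∑ j, ν i * (A i j * (βhat j - βbar j)) := Finset.sum_comm
      _ = ∑ i, ν i * A.mulVec (βhat - βbar) i := by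
          apply Finset.sum_congr rfl; intro i _
          rw [← Finset.mul_sum, hwsum i]
  -- AM-GM
  have amgm : 0 ≤ lam^2 * ∑ i, (ν i)^2 + (1/4) * ∑ i, (A.mulVec (βhat - βbar) i)^2
      + lam * ∑ i, ν i * A.mulVec (βhat - βbar) i := by
    rw [Finset.mul_sum, Finset.mul_sum, Finset.mul_sum, ← Finset.sum_add_distrib,
      ← Finset.sum_add_distrib]
    apply Finset.sum_nonneg
    intro i _
    nlinarith [sq_nonneg (lam * ν i + A.mulVec (βhat - βbar) i / 2)]
  have hstep : lam * (∑ j, |βbar j| - ∑ j, |βhat j|)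
      ≤ lam * (- ∑ i, ν i * A.mulVec (βhat - βbar) i) := by
    apply mul_le_mul_of_nonneg_left _ (le_of_lt hlam)
    rw [← swap]; linarith
  have hR : 0 ≤ ∑ i, (y i - A.mulVec βbar i)^2 :=
    Finset.sum_nonneg fun i _ => sq_nonneg _
  have hneg : lam * (- ∑ i, ν i * A.mulVec (βhat - βbar) i)
      = - (lam * ∑ i, ν i * A.mulVec (βhat - βbar) i) := by ring
  linarith
end

section
/- Consider the function F(β) = (1/2)‖y − A β‖₂² + λ‖β‖₁ with λ > 0. Suppose x* satisfies the KKT conditions on its support T: A_T^T(y − A x*) = λ sgn(x*_T), x*_{T^c} = 0, and A_{T^c}^T(y − A x*) = λ ε_{T^c} with ‖ε_{T^c}‖_∞ < 1. Then for any direction h ∈ ℝ^N with h_{T^c} ≠ 0 and all sufficiently small t > 0 (small enough that sgn(x*_T + t h_T) = sgn(x*_T)), F(x* + t h) = F(x*) + (t²/2)‖A h‖₂² + λ t (‖h_{T^c}‖₁ − ⟨ε_{T^c}, h_{T^c}⟩) > F(x*). -/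
/-!
Expanding the square and the ℓ¹ norm along `x⋆ + t h` makes the first-order terms
`⟨Aᵀ(y - A x⋆), h⟩` and `∑_{j ∈ T} sgn(x⋆ⱼ) hⱼ` appear; the KKT conditions make them cancel
on `T`, leaving `λ t (‖h_{Tᶜ}‖₁ - ⟨ε, h_{Tᶜ}⟩) + (t²/2)‖A h‖²`, which is positive by the strict
Hölder inequality since `|εⱼ| < 1` off `T` and `h` does not vanish there.
-/

open Finset Matrix

theorem Real.sign_mul_self_eq_abs (u : ℝ) : Real.sign u * u = |u| := by
  rcases lt_trichotomy u 0 with hu | rfl | hu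
  · rw [Real.sign_of_neg hu, abs_of_neg hu]; ring
  · simp
  · rw [Real.sign_of_pos hu, abs_of_pos hu]; ring

theorem Real.abs_add_of_sign_add_eq {u v : ℝ} (h : Real.sign (u + v) = Real.sign u) :
    |u + v| = |u| + Real.sign u * v := by
  rw [← Real.sign_mul_self_eq_abs, h, ← Real.sign_mul_self_eq_abs]; ring

section Expansion

variable {m n : Type*} [Fintype m] [Fintype n]

theorem sum_mul_mulVec_eq_sum_mul (A : Matrix m n ℝ) (r : m → ℝ) (h : n → ℝ) :
    ∑ i, r i * (A *ᵥ h) i = ∑ j, (∑ i, A i j * r i) * h j := by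
  simp only [mulVec, dotProduct, mul_sum, sum_mul]
  rw [sum_comm]
  exact sum_congr rfl fun j _ => sum_congr rfl fun i _ => by ring

theorem sum_sq_sub_mulVec_add_smul (A : Matrix m n ℝ) (y : m → ℝ) (x h : n → ℝ) (t : ℝ) :
    ∑ i, (y i - (A *ᵥ (x + t • h)) i) ^ 2 =
      ∑ i, (y i - (A *ᵥ x) i) ^ 2 - 2 * t * ∑ j, (∑ i, A i j * (y i - (A *ᵥ x) i)) * h j
        + t ^ 2 * ∑ i, (A *ᵥ h) i ^ 2 := by
  rw [← sum_mul_mulVec_eq_sum_mul, mul_sum, mul_sum, ← sum_sub_distrib, ← sum_add_distrib]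
  refine sum_congr rfl fun i _ => ?_
  simp only [mulVec_add, mulVec_smul, Pi.add_apply, Pi.smul_apply, smul_eq_mul]
  ring

theorem sum_abs_add_smul_of_sign_eq [DecidableEq n] (T : Finset n) {x h : n → ℝ} {t : ℝ} (ht : 0 ≤ t)
    (hsupp : ∀ j ∉ T, x j = 0) (hsgn : ∀ j ∈ T, Real.sign (x j + t * h j) = Real.sign (x j)) :
    ∑ j, |(x + t • h) j| =
      ∑ j, |x j| + t * ∑ j ∈ T, Real.sign (x j) * h j + t * ∑ j ∈ Tᶜ, |h j| := by
  have hT : ∑ j ∈ T, |(x + t • h) j| = ∑ j ∈ T, |x j| + t * ∑ j ∈ T, Real.sign (x j) * h j := by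
    rw [mul_sum, ← sum_add_distrib]
    refine sum_congr rfl fun j hj => ?_
    rw [Pi.add_apply, Pi.smul_apply, smul_eq_mul, Real.abs_add_of_sign_add_eq (hsgn j hj)]
    ring
  have hTc : ∑ j ∈ Tᶜ, |(x + t • h) j| = ∑ j ∈ Tᶜ, |x j| + t * ∑ j ∈ Tᶜ, |h j| := by
    rw [mul_sum, ← sum_add_distrib]
    refine sum_congr rfl fun j hj => ?_
    rw [Pi.add_apply, Pi.smul_apply, smul_eq_mul, hsupp j (mem_compl.mp hj), zero_add, abs_zero,
      zero_add, abs_mul, abs_of_nonneg ht]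
  rw [← sum_add_sum_compl T, ← sum_add_sum_compl T (fun j => |x j|), hT, hTc]
  ring

end Expansion

theorem Finset.sum_mul_lt_sum_abs_of_abs_lt_one {ι : Type*} {s : Finset ι} {ε h : ι → ℝ}
    (hε : ∀ j ∈ s, |ε j| < 1) (hh : ∃ j ∈ s, h j ≠ 0) :
    ∑ j ∈ s, ε j * h j < ∑ j ∈ s, |h j| := by
  have hle : ∀ j ∈ s, ε j * h j ≤ |ε j| * |h j| := fun j _ => abs_mul (ε j) (h j) ▸ le_abs_self _
  refine sum_lt_sum (fun j hj => ?_) ?_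
  · exact (hle j hj).trans (mul_le_of_le_one_left (abs_nonneg _) (hε j hj).le)
  · obtain ⟨j, hj, hhj⟩ := hh
    exact ⟨j, hj, (hle j hj).trans_lt (mul_lt_of_lt_one_left (abs_pos.mpr hhj) (hε j hj))⟩

theorem stmt18 {d N : ℕ} (A : Matrix (Fin d) (Fin N) ℝ) (y : Fin d → ℝ)
    (lam : ℝ) (hlam : 0 < lam)
    (T : Finset (Fin N)) (xstar ε : Fin N → ℝ)
    (hsupp : ∀ j ∉ T, xstar j = 0)
    (hKKT_T : ∀ j ∈ T, ∑ i, A i j * (y i - A.mulVec xstar i) = lam * Real.sign (xstar j))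
    (hKKT_Tc : ∀ j ∉ T, ∑ i, A i j * (y i - A.mulVec xstar i) = lam * ε j)
    (hε : ∀ j ∉ T, |ε j| < 1)
    (h : Fin N → ℝ) (hh : ∃ j ∉ T, h j ≠ 0)
    (t : ℝ) (ht : 0 < t)
    (hsgn : ∀ j ∈ T, Real.sign (xstar j + t * h j) = Real.sign (xstar j)) :
    ((1/2) * ∑ i, (y i - A.mulVec (xstar + t • h) i)^2 + lam * ∑ j, |(xstar + t • h) j| =
      (1/2) * ∑ i, (y i - A.mulVec xstar i)^2 + lam * ∑ j, |xstar j|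
        + (t^2/2) * ∑ i, (A.mulVec h i)^2
        + lam * t * ((∑ j ∈ Tᶜ, |h j|) - ∑ j ∈ Tᶜ, ε j * h j)) ∧
    (1/2) * ∑ i, (y i - A.mulVec xstar i)^2 + lam * ∑ j, |xstar j| <
      (1/2) * ∑ i, (y i - A.mulVec (xstar + t • h) i)^2 + lam * ∑ j, |(xstar + t • h) j| := by
  have hgrad : ∑ j, (∑ i, A i j * (y i - A.mulVec xstar i)) * h j
      = lam * ∑ j ∈ T, Real.sign (xstar j) * h j + lam * ∑ j ∈ Tᶜ, ε j * h j := by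
    rw [← sum_add_sum_compl T, mul_sum, mul_sum]
    congr 1
    · exact sum_congr rfl fun j hj => by rw [hKKT_T j hj, mul_assoc]
    · exact sum_congr rfl fun j hj => by rw [hKKT_Tc j (mem_compl.mp hj), mul_assoc]
  have hexpand : (1/2) * ∑ i, (y i - A.mulVec (xstar + t • h) i)^2
        + lam * ∑ j, |(xstar + t • h) j| =
      (1/2) * ∑ i, (y i - A.mulVec xstar i)^2 + lam * ∑ j, |xstar j|
        + (t^2/2) * ∑ i, (A.mulVec h i)^2
        + lam * t * ((∑ j ∈ Tᶜ, |h j|) - ∑ j ∈ Tᶜ, ε j * h j) := by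
    rw [sum_sq_sub_mulVec_add_smul, hgrad, sum_abs_add_smul_of_sign_eq T ht.le hsupp hsgn]
    ring
  have hholder : ∑ j ∈ Tᶜ, ε j * h j < ∑ j ∈ Tᶜ, |h j| :=
    sum_mul_lt_sum_abs_of_abs_lt_one (fun j hj => hε j (mem_compl.mp hj))
      (by simpa only [mem_compl] using hh)
  refine ⟨hexpand, hexpand ▸ ?_⟩
  have hquad : 0 ≤ (t^2/2) * ∑ i, (A.mulVec h i)^2 := by positivity
  have hlin : 0 < lam * t * ((∑ j ∈ Tᶜ, |h j|) - ∑ j ∈ Tᶜ, ε j * h j) :=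
    mul_pos (mul_pos hlam ht) (sub_pos.mpr hholder)
  linarith
end
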